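/- Let A = S/I be a monomial Artinian K-algebra such that the poset M(A) of monomials not in I (ordered by divisibility) has the LYM property. Suppose there is an integer p such that dim_K A_p > dim_K A_k for all k ≠ p. If J is a monomial ideal of A with μ(J) = dim_K A_p, then J = (I + m^p)/I. -/

import Mathlib

/-! The monomials outside `I` are a `K`-basis of `A`, so `dim_K A_k = #M_k`. The minimal monomials
of `J` outside `I` generate `J/I` and form an antichain `G` of `M(A)`, so `dim_K A_p = μ(J/I) ≤ #G`.
By LYM, `∑_{g ∈ G} 1/#M_{deg g} ≤ 1`, while every term is at least `1/#M_p`, strictly so outside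
degree `p`. Hence `G ⊆ M_p` and `#G ≥ #M_p`, so `G = M_p`, which says exactly `J = I + m^p`. -/

open MvPolynomial

/-- The minimal number of generators of an ideal. -/
noncomputable def mu {R : Type*} [CommRing R] (I : Ideal R) : ℕ :=
  sInf {k | ∃ s : Finset R, s.card = k ∧ Ideal.span (s : Set R) = I}

/-- The graded maximal ideal `(x₁, …, xₙ)` of `K[x₁, …, xₙ]`. -/
noncomputable def mm (K : Type*) [Field K] (n : ℕ) : Ideal (MvPolynomial (Fin n) K) :=
  Ideal.span (Set.range X)

/-- `I` is `m`-full: `mI : y = I` for some `y ∈ m`. -/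
def IsMFull {R : Type*} [CommRing R] (m I : Ideal R) : Prop :=
  ∃ y ∈ m, (m * I).colon (Ideal.span {y}) = I

/-- A homogeneous ideal: one containing all homogeneous components of its elements. -/
def IsHomog {K : Type*} [Field K] {n : ℕ} (I : Ideal (MvPolynomial (Fin n) K)) : Prop :=
  ∀ f ∈ I, ∀ k : ℕ, homogeneousComponent k f ∈ I

/-- `dim_K (S/I)_k`, the dimension of the degree `k` part of `S/I`. -/
noncomputable def hdim (K : Type*) [Field K] (n : ℕ)
    (I : Ideal (MvPolynomial (Fin n) K)) (k : ℕ) : ℕ :=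
  Module.finrank K (Submodule.map (Ideal.Quotient.mkₐ K I).toLinearMap
    (homogeneousSubmodule (Fin n) K k))

/-- The total degree of an exponent vector. -/
def mdeg {n : ℕ} (d : Fin n →₀ ℕ) : ℕ := d.sum fun _ e => e

/-- `M_k(S/I)`: the exponent vectors of degree `k` monomials not in `I`. -/
def MSet (K : Type*) [Field K] {n : ℕ} (I : Ideal (MvPolynomial (Fin n) K)) (k : ℕ) :
    Set (Fin n →₀ ℕ) := {d | mdeg d = k ∧ (monomial d (1 : K)) ∉ I}

/-- `I` is a monomial ideal. -/
def IsMonomialIdeal {K : Type*} [Field K] {n : ℕ} (I : Ideal (MvPolynomial (Fin n) K)) : Prop :=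
  ∀ f ∈ I, ∀ d ∈ f.support, (monomial d (1 : K)) ∈ I

/-- The LYM property of the divisibility poset of monomials outside `I`,
ranked by degree.  (Divisibility of monomials is the pointwise order `≤` on
exponent vectors.) -/
def MLYM (K : Type*) [Field K] {n : ℕ} (I : Ideal (MvPolynomial (Fin n) K)) : Prop :=
  ∀ F : Finset (Fin n →₀ ℕ), (∀ d ∈ F, (monomial d (1 : K)) ∉ I) →
    IsAntichain (· ≤ ·) (F : Set (Fin n →₀ ℕ)) →
    ∑ d ∈ F, (1 : ℚ) / (MSet K I (mdeg d)).ncard ≤ 1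

/-- The Sperner property of the Artinian algebra `S/I`:
the maximal number of generators of an ideal of `S/I` equals the maximal
value of the Hilbert function of `S/I`. -/
def SpernerAlg {K : Type*} [Field K] {n : ℕ} (I : Ideal (MvPolynomial (Fin n) K)) : Prop :=
  sSup {m | ∃ J : Ideal (MvPolynomial (Fin n) K ⧸ I), mu J = m}
    = sSup (Set.range (hdim K n I))

theorem mu_le_card {R : Type*} [CommRing R] {J : Ideal R} {s : Finset R}
    (hs : Ideal.span (s : Set R) = J) : mu J ≤ s.card :=
  Nat.sInf_le ⟨s, rfl, hs⟩

theorem LinearIndepOn.finrank_span_image {K V ι : Type*} [Field K] [AddCommGroup V] [Module K V]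
    {v : ι → V} {s : Set ι} (hv : LinearIndepOn K v s) (hs : s.Finite) :
    Module.finrank K (Submodule.span K (v '' s)) = s.ncard := by
  have := hs.fintype
  rw [Set.image_eq_range, finrank_span_eq_card hv, ← Nat.card_eq_fintype_card, Nat.card_coe_set_eq]

theorem Finset.forall_eq_of_sum_one_div_le_one {ι : Type*} {s : Finset ι} {N : ι → ℕ} {M : ℕ}
    (hpos : ∀ i ∈ s, 0 < N i) (hle : ∀ i ∈ s, N i ≤ M) (hsum : ∑ i ∈ s, (1 : ℚ) / N i ≤ 1)
    (hcard : M ≤ s.card) : ∀ i ∈ s, N i = M := by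
  by_contra! ⟨i, hi, hne⟩
  have hM : 0 < M := (hpos i hi).trans_le (hle i hi)
  have hbound : ∀ j ∈ s, (1 : ℚ) / M ≤ 1 / N j := fun j hj =>
    one_div_le_one_div_of_le (by exact_mod_cast hpos j hj) (by exact_mod_cast hle j hj)
  have hstrict : (1 : ℚ) / M < 1 / N i :=
    one_div_lt_one_div_of_lt (by exact_mod_cast hpos i hi)
      (by exact_mod_cast (hle i hi).lt_of_ne hne)
  have : (1 : ℚ) < ∑ j ∈ s, 1 / (N j : ℚ) :=
    calc (1 : ℚ) ≤ s.card / M := by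
          rw [le_div_iff₀ (by exact_mod_cast hM)]; exact_mod_cast (one_mul M).trans_le hcard
      _ = ∑ _j ∈ s, (1 : ℚ) / M := by rw [Finset.sum_const, nsmul_eq_mul, mul_one_div]
      _ < _ := Finset.sum_lt_sum hbound ⟨i, hi, hstrict⟩
  exact hsum.not_gt this

namespace MvPolynomial

variable {σ R : Type*} [CommSemiring R]

theorem mem_of_monomial_mem {L : Ideal (MvPolynomial σ R)} {f : MvPolynomial σ R}
    (h : ∀ d ∈ f.support, monomial d (1 : R) ∈ L) : f ∈ L := by
  rw [f.as_sum]
  refine Ideal.sum_mem _ fun d hd => ?_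
  simpa only [C_mul_monomial, mul_one] using L.mul_mem_left (C (f.coeff d)) (h d hd)

theorem homogeneousSubmodule_eq_span_monomial (k : ℕ) :
    homogeneousSubmodule σ R k = Submodule.span R ((monomial · (1 : R)) '' {d | d.degree = k}) := by
  rw [homogeneousSubmodule_eq_finsupp_supported, AddMonoidAlgebra.supported_eq_span_single]
  rfl

/-- The exponents of the minimal monomial generators of `J / I`. -/
def minimalExponents (I J : Ideal (MvPolynomial σ R)) : Set (σ →₀ ℕ) :=
  {d | Minimal (fun e => monomial e (1 : R) ∈ J ∧ monomial e (1 : R) ∉ I) d}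

variable {I J : Ideal (MvPolynomial σ R)}

theorem minimalExponents_isAntichain : IsAntichain (· ≤ ·) (minimalExponents I J) :=
  setOfPred_minimal_antichain _

theorem monomial_notMem_of_mem_minimalExponents {d : σ →₀ ℕ} (hd : d ∈ minimalExponents I J) :
    monomial d (1 : R) ∉ I :=
  hd.1.2

theorem exists_mem_minimalExponents_le {d : σ →₀ ℕ} (hJ : monomial d (1 : R) ∈ J)
    (hI : monomial d (1 : R) ∉ I) : ∃ g ∈ minimalExponents I J, g ≤ d := by
  obtain ⟨g, hgd, hg⟩ := exists_minimal_le_of_wellFoundedLT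
    (fun e => monomial e (1 : R) ∈ J ∧ monomial e (1 : R) ∉ I) d ⟨hJ, hI⟩
  exact ⟨g, hg, hgd⟩

end MvPolynomial

section MonomialQuotient

variable {K : Type*} [Field K] {n : ℕ} {I J : Ideal (MvPolynomial (Fin n) K)}

theorem IsMonomialIdeal.le_of_monomial_mem {L : Ideal (MvPolynomial (Fin n) K)}
    (hJ : IsMonomialIdeal J) (h : ∀ d, monomial d (1 : K) ∈ J → monomial d (1 : K) ∈ L) :
    J ≤ L :=
  fun f hf => mem_of_monomial_mem fun d hd => h d (hJ f hf d hd)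

theorem IsMonomialIdeal.linearIndepOn_mk_monomial (hI : IsMonomialIdeal I) :
    LinearIndepOn K (fun d => Ideal.Quotient.mk I (monomial d (1 : K)))
      {d | monomial d (1 : K) ∉ I} := by
  classical
  rw [LinearIndepOn, linearIndependent_iff']
  intro s c hc j hj
  by_contra hcj
  let f := ∑ i ∈ s, monomial i.1 (c i)
  have hfI : f ∈ I := by
    rw [← Ideal.Quotient.eq_zero_iff_mem, ← hc, map_sum]
    refine Finset.sum_congr rfl fun i _ => ?_
    rw [← mul_one (c i), ← C_mul_monomial, map_mul, mul_one]
    exact (Algebra.smul_def (A := MvPolynomial (Fin n) K ⧸ I) (c i) _).symm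
  have hcoeff : f.coeff j.1 = c j := by
    simp [f, coeff_sum, coeff_monomial, Subtype.val_inj, hj]
  exact j.2 (hI f hfI j.1 (by rwa [mem_support_iff, hcoeff]))

theorem IsMonomialIdeal.eq_sup_span_minimalExponents (hJ : IsMonomialIdeal J) (hIJ : I ≤ J) :
    J = I ⊔ Ideal.span ((monomial · (1 : K)) '' minimalExponents I J) := by
  classical
  refine le_antisymm (hJ.le_of_monomial_mem fun d hdJ => ?_)
    (sup_le hIJ (Ideal.span_le.mpr (Set.image_subset_iff.mpr fun d hd => hd.1.1)))
  by_cases hdI : monomial d (1 : K) ∈ I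
  · exact Ideal.mem_sup_left hdI
  obtain ⟨g, hg, hgd⟩ := exists_mem_minimalExponents_le hdJ hdI
  refine Ideal.mem_sup_right (mem_ideal_span_monomial_image.mpr fun e he => ⟨g, hg, ?_⟩)
  rw [support_monomial, if_neg one_ne_zero, Finset.mem_singleton] at he
  exact he ▸ hgd

variable [FiniteDimensional K (MvPolynomial (Fin n) K ⧸ I)]

theorem IsMonomialIdeal.finite_setOf_monomial_notMem (hI : IsMonomialIdeal I) :
    {d : Fin n →₀ ℕ | monomial d (1 : K) ∉ I}.Finite :=
  Set.finite_coe_iff.mp hI.linearIndepOn_mk_monomial.finite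

theorem IsMonomialIdeal.finite_MSet (hI : IsMonomialIdeal I) (k : ℕ) : (MSet K I k).Finite :=
  hI.finite_setOf_monomial_notMem.subset fun _ hd => hd.2

theorem IsMonomialIdeal.finite_minimalExponents (hI : IsMonomialIdeal I) :
    (minimalExponents I J).Finite :=
  hI.finite_setOf_monomial_notMem.subset fun _ hd => monomial_notMem_of_mem_minimalExponents hd

theorem IsMonomialIdeal.hdim_eq_ncard_MSet (hI : IsMonomialIdeal I) (k : ℕ) :
    hdim K n I k = (MSet K I k).ncard := by
  let v := fun d : Fin n →₀ ℕ => Ideal.Quotient.mk I (monomial d (1 : K))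
  have hspan : Submodule.map (Ideal.Quotient.mkₐ K I).toLinearMap
      (homogeneousSubmodule (Fin n) K k) = Submodule.span K (v '' MSet K I k) := by
    rw [homogeneousSubmodule_eq_span_monomial, Submodule.map_span, Set.image_image]
    refine le_antisymm (Submodule.span_le.mpr ?_) (Submodule.span_mono (Set.image_mono ?_))
    · rintro _ ⟨d, hd, rfl⟩
      by_cases hdI : monomial d (1 : K) ∈ I
      · simp [Ideal.Quotient.eq_zero_iff_mem.mpr hdI]
      · exact Submodule.subset_span ⟨d, ⟨hd, hdI⟩, rfl⟩
    · exact fun d hd => hd.1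
  rw [hdim, hspan, (hI.linearIndepOn_mk_monomial.mono fun d hd => hd.2).finrank_span_image
    (hI.finite_MSet k)]

theorem IsMonomialIdeal.mu_map_mk_le_ncard (hI : IsMonomialIdeal I) (hJ : IsMonomialIdeal J)
    (hIJ : I ≤ J) : mu (J.map (Ideal.Quotient.mk I)) ≤ (minimalExponents I J).ncard := by
  classical
  have hfin := hI.finite_minimalExponents (J := J)
  let gens := hfin.toFinset.image fun d => Ideal.Quotient.mk I (monomial d (1 : K))
  have hgens : Ideal.span (gens : Set _) = J.map (Ideal.Quotient.mk I) := by
    conv_rhs => rw [hJ.eq_sup_span_minimalExponents hIJ]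
    rw [Ideal.map_sup, Ideal.map_quotient_self, bot_sup_eq, Ideal.map_span, Set.image_image,
      Finset.coe_image, hfin.coe_toFinset]
  calc mu (J.map (Ideal.Quotient.mk I)) ≤ gens.card := mu_le_card hgens
    _ ≤ hfin.toFinset.card := Finset.card_image_le
    _ = (minimalExponents I J).ncard := (Set.ncard_eq_toFinset_card _ hfin).symm

theorem IsMonomialIdeal.minimalExponents_eq_MSet (hI : IsMonomialIdeal I) (hLYM : MLYM K I)
    {p : ℕ} (hp : ∀ k, k ≠ p → hdim K n I k < hdim K n I p) (hJ : IsMonomialIdeal J)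
    (hIJ : I ≤ J) (hmu : hdim K n I p ≤ mu (J.map (Ideal.Quotient.mk I))) :
    minimalExponents I J = MSet K I p := by
  have hfin := hI.finite_minimalExponents (J := J)
  have hnotI : ∀ d ∈ hfin.toFinset, monomial d (1 : K) ∉ I := fun d hd =>
    monomial_notMem_of_mem_minimalExponents (hfin.mem_toFinset.mp hd)
  have hcard : hdim K n I p ≤ (minimalExponents I J).ncard :=
    hmu.trans (hI.mu_map_mk_le_ncard hJ hIJ)
  have hdeg : ∀ d ∈ hfin.toFinset, hdim K n I (mdeg d) = hdim K n I p := by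
    refine Finset.forall_eq_of_sum_one_div_le_one (fun d hd => ?_) (fun d _ => ?_) ?_
      (by rwa [← Set.ncard_eq_toFinset_card _ hfin])
    · rw [hI.hdim_eq_ncard_MSet]
      exact (Set.ncard_pos (hI.finite_MSet _)).mpr ⟨d, rfl, hnotI d hd⟩
    · by_cases h : mdeg d = p
      · rw [h]
      · exact (hp _ h).le
    · simpa only [hI.hdim_eq_ncard_MSet] using hLYM _ hnotI
        (by simpa only [Set.Finite.coe_toFinset] using minimalExponents_isAntichain)
  have hsub : minimalExponents I J ⊆ MSet K I p := fun d hd =>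
    ⟨by_contra fun h => (hp _ h).ne (hdeg d (hfin.mem_toFinset.mpr hd)),
      monomial_notMem_of_mem_minimalExponents hd⟩
  exact Set.eq_of_subset_of_ncard_le hsub (by rwa [← hI.hdim_eq_ncard_MSet]) (hI.finite_MSet p)

end MonomialQuotient

theorem sup_span_MSet_eq_sup_mm_pow {K : Type*} [Field K] {n : ℕ}
    (I : Ideal (MvPolynomial (Fin n) K)) (p : ℕ) :
    I ⊔ Ideal.span ((monomial · (1 : K)) '' MSet K I p) = I ⊔ mm K n ^ p := by
  rw [show mm K n = idealOfVars (Fin n) K from rfl, pow_idealOfVars_eq_span]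
  refine le_antisymm (sup_le_sup_left (Ideal.span_mono (Set.image_mono fun d hd => hd.1)) I)
    (sup_le le_sup_left (Ideal.span_le.mpr ?_))
  rintro _ ⟨d, hd, rfl⟩
  by_cases hdI : monomial d (1 : K) ∈ I
  · exact Ideal.mem_sup_left hdI
  · exact Ideal.mem_sup_right (Ideal.subset_span ⟨d, ⟨hd, hdI⟩, rfl⟩)

/-- Let `A = S/I` be a monomial Artinian algebra whose monomial poset has the
LYM property, and let `p` be the unique degree where the Hilbert function is
maximal.  If `J` is a monomial ideal of `A` with `μ(J) = dim_K A_p`, then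
`J = (I + m^p)/I`. -/
theorem stmt4 {K : Type*} [Field K] {n : ℕ} (I : Ideal (MvPolynomial (Fin n) K))
    (hmon : IsMonomialIdeal I) [FiniteDimensional K (MvPolynomial (Fin n) K ⧸ I)]
    (hLYM : MLYM K I)
    (p : ℕ) (hp : ∀ k : ℕ, k ≠ p → hdim K n I k < hdim K n I p)
    (J : Ideal (MvPolynomial (Fin n) K)) (hIJ : I ≤ J) (hJmon : IsMonomialIdeal J)
    (hmu : mu (J.map (Ideal.Quotient.mk I)) = hdim K n I p) :
    J.map (Ideal.Quotient.mk I) = (I + mm K n ^ p).map (Ideal.Quotient.mk I) := by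
  have hJ : J = I ⊔ mm K n ^ p := by
    rw [← sup_span_MSet_eq_sup_mm_pow, ← hmon.minimalExponents_eq_MSet hLYM hp hJmon hIJ hmu.ge]
    exact hJmon.eq_sup_span_minimalExponents hIJ
  rw [hJ, Submodule.add_eq_sup]
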